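/- Suppose r ≥ s ≥ 2 and B_{r,s}(p) − 2p + 1 > 0 for all p ∈ [0,1) (i.e., p_* = 1). Then −log(1 − p_k) = Ω(s^k): there exist a constant c > 0 and an integer K such that 1 − p_k ≤ exp(−c·s^k) for all k ≥ K. -/

import Mathlib

/-- `B r s p = ∑_{i=0}^{s-1} C(r,i) p^{r-i} (1-p)^i`, the probability that a
Binomial(r,p) random variable exceeds `r - s`. -/
noncomputable def B (r s : ℕ) (p : ℝ) : ℝ :=
  ∑ i ∈ Finset.range s, (r.choose i : ℝ) * p ^ (r - i) * (1 - p) ^ i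

/-- `f k (x, p) = (k+1) B_{r,s}(p) - k B_{r,s}(x) - 2x + 1`. -/
noncomputable def f (r s k : ℕ) (x p : ℝ) : ℝ :=
  ((k : ℝ) + 1) * B r s p - (k : ℝ) * B r s x - 2 * x + 1

/-!
Write `q k = 1 - p k` and `a k = 1 - B r s (p k)`, so that `q k ^ r ≤ a k ≤ 2 ^ r * q k ^ s`; the
equation defining `p (m + 1)` is the recurrence `(m + 2) a m = (m + 1) a (m + 1) + 2 q (m + 1)`.
Since `(1 - B r s x) / (1 - x)` is a polynomial which vanishes at `1` and, by hypothesis, stays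
below `2` on `[0, 1)`, compactness gives `a ≤ θ q` with `θ < 2`. Then
`(m + 2) (a m - a (m + 1)) ≥ κ a (m + 1)` with `κ > 0`, which forces `a → 0` because the harmonic
series diverges; hence `q → 0`, and eventually `2 a ≤ q`. From then on Abel summation of the
recurrence shows that `q` is summable, so `(K + 2) q K` is arbitrarily small for some `K`. Finally
`q (k + 1) ≤ 2 ^ r (k + 2) q k ^ s`, so `δ k = 2 ^ (r + 1) (k + 2) q k` satisfies
`δ (k + 1) ≤ δ k ^ s`, and `δ K < 1` gives `q k ≤ δ k ≤ δ K ^ s ^ (k - K)`.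
-/

open Finset Filter Topology

/-- `(1 - B r s x) / (1 - x)`, written as a polynomial so that it makes sense at `x = 1`. -/
noncomputable def tailRatio (r s : ℕ) (x : ℝ) : ℝ :=
  ∑ i ∈ Ico s (r + 1), (r.choose i : ℝ) * x ^ (r - i) * (1 - x) ^ (i - 1)

section

variable {r s : ℕ}

lemma one_sub_B_eq_mul_tailRatio (hs : 1 ≤ s) (hrs : s ≤ r) (x : ℝ) :
    1 - B r s x = (1 - x) * tailRatio r s x := by
  have hbinom : ∑ i ∈ range (r + 1), (r.choose i : ℝ) * x ^ (r - i) * (1 - x) ^ i = 1 := by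
    have h := add_pow (1 - x) x r
    rw [sub_add_cancel, one_pow] at h
    exact (sum_congr rfl fun i _ => by ring).trans h.symm
  rw [range_eq_Ico, ← sum_Ico_consecutive _ (Nat.zero_le s) (by omega : s ≤ r + 1),
    ← range_eq_Ico] at hbinom
  calc 1 - B r s x = ∑ i ∈ Ico s (r + 1), (r.choose i : ℝ) * x ^ (r - i) * (1 - x) ^ i := by
        rw [B]; linarith
    _ = (1 - x) * tailRatio r s x := by
        rw [tailRatio, mul_sum]
        refine sum_congr rfl fun i hi => ?_
        obtain ⟨j, rfl⟩ : ∃ j, i = j + 1 := ⟨i - 1, by have := (mem_Ico.1 hi).1; omega⟩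
        simp only [add_tsub_cancel_right]
        ring

lemma tailRatio_nonneg {x : ℝ} (hx : x ∈ Set.Icc (0 : ℝ) 1) : 0 ≤ tailRatio r s x :=
  sum_nonneg fun i _ => by have := hx.1; have := sub_nonneg.2 hx.2; positivity

lemma pow_pred_le_tailRatio (hrs : s ≤ r) {x : ℝ} (hx : x ∈ Set.Icc (0 : ℝ) 1) :
    (1 - x) ^ (r - 1) ≤ tailRatio r s x := by
  have := hx.1; have := sub_nonneg.2 hx.2
  calc (1 - x) ^ (r - 1) = (r.choose r : ℝ) * x ^ (r - r) * (1 - x) ^ (r - 1) := by simp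
    _ ≤ tailRatio r s x :=
      single_le_sum (f := fun i => (r.choose i : ℝ) * x ^ (r - i) * (1 - x) ^ (i - 1))
        (fun i _ => by positivity) (mem_Ico.2 ⟨hrs, r.lt_succ_self⟩)

lemma tailRatio_le (hs : 1 ≤ s) {x : ℝ} (hx : x ∈ Set.Icc (0 : ℝ) 1) :
    tailRatio r s x ≤ 2 ^ r * (1 - x) ^ (s - 1) := by
  have h0 := hx.1; have h1 := sub_nonneg.2 hx.2
  calc tailRatio r s x ≤ ∑ i ∈ Ico s (r + 1), (r.choose i : ℝ) * (1 - x) ^ (s - 1) := by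
        refine sum_le_sum fun i hi => ?_
        rw [mul_assoc]
        gcongr
        calc x ^ (r - i) * (1 - x) ^ (i - 1) ≤ 1 * (1 - x) ^ (s - 1) :=
              mul_le_mul (pow_le_one₀ h0 hx.2)
                (pow_le_pow_of_le_one h1 (by linarith) (by have := (mem_Ico.1 hi).1; omega))
                (by positivity) zero_le_one
          _ = (1 - x) ^ (s - 1) := one_mul _
    _ ≤ ∑ i ∈ range (r + 1), (r.choose i : ℝ) * (1 - x) ^ (s - 1) := by
        refine sum_le_sum_of_subset_of_nonneg ?_ fun i _ _ => by positivity
        rw [range_eq_Ico]; exact Ico_subset_Ico_left (Nat.zero_le s)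
    _ = 2 ^ r * (1 - x) ^ (s - 1) := by
        rw [← sum_mul, ← Nat.cast_sum, Nat.sum_range_choose, Nat.cast_pow, Nat.cast_ofNat]

lemma tailRatio_one (hs : 2 ≤ s) : tailRatio r s 1 = 0 :=
  sum_eq_zero fun i hi => by
    have := (mem_Ico.1 hi).1
    rw [sub_self, zero_pow (by omega), mul_zero]

lemma continuous_tailRatio : Continuous (tailRatio r s) := by
  unfold tailRatio; fun_prop

lemma one_sub_B_nonneg (hs : 1 ≤ s) (hrs : s ≤ r) {x : ℝ} (hx : x ∈ Set.Icc (0 : ℝ) 1) :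
    0 ≤ 1 - B r s x := by
  rw [one_sub_B_eq_mul_tailRatio hs hrs]
  exact mul_nonneg (sub_nonneg.2 hx.2) (tailRatio_nonneg hx)

lemma pow_le_one_sub_B (hs : 1 ≤ s) (hrs : s ≤ r) {x : ℝ} (hx : x ∈ Set.Icc (0 : ℝ) 1) :
    (1 - x) ^ r ≤ 1 - B r s x := by
  calc (1 - x) ^ r = (1 - x) * (1 - x) ^ (r - 1) := by
        rw [← pow_succ', Nat.sub_add_cancel (by omega)]
    _ ≤ 1 - B r s x := by
        rw [one_sub_B_eq_mul_tailRatio hs hrs]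
        exact mul_le_mul_of_nonneg_left (pow_pred_le_tailRatio hrs hx) (sub_nonneg.2 hx.2)

lemma one_sub_B_le (hs : 1 ≤ s) (hrs : s ≤ r) {x : ℝ} (hx : x ∈ Set.Icc (0 : ℝ) 1) :
    1 - B r s x ≤ 2 ^ r * (1 - x) ^ s := by
  rw [one_sub_B_eq_mul_tailRatio hs hrs]
  calc (1 - x) * tailRatio r s x ≤ (1 - x) * (2 ^ r * (1 - x) ^ (s - 1)) :=
        mul_le_mul_of_nonneg_left (tailRatio_le hs hx) (sub_nonneg.2 hx.2)
    _ = 2 ^ r * (1 - x) ^ s := by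
        rw [mul_left_comm, ← pow_succ', Nat.sub_add_cancel hs]

lemma two_mul_one_sub_B_le (hs : 2 ≤ s) (hrs : s ≤ r) {x : ℝ} (hx : x ∈ Set.Icc (0 : ℝ) 1)
    (hsmall : 2 ^ (r + 1) * (1 - x) ≤ 1) : 2 * (1 - B r s x) ≤ 1 - x := by
  have h0 := sub_nonneg.2 hx.2
  calc 2 * (1 - B r s x) ≤ 2 * (2 ^ r * (1 - x) ^ s) := by
        gcongr; exact one_sub_B_le (by omega) hrs hx
    _ ≤ 2 ^ (r + 1) * (1 - x) ^ 2 := by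
        rw [pow_succ, mul_comm _ 2, mul_assoc]
        exact mul_le_mul_of_nonneg_left
          (mul_le_mul_of_nonneg_left (pow_le_pow_of_le_one h0 (by linarith [hx.1]) hs)
            (by positivity)) zero_le_two
    _ = (2 ^ (r + 1) * (1 - x)) * (1 - x) := by ring
    _ ≤ 1 - x := mul_le_of_le_one_left h0 hsmall

lemma exists_one_sub_B_le_mul_lt_two (hs : 2 ≤ s) (hrs : s ≤ r)
    (hpos : ∀ x ∈ Set.Ico (0 : ℝ) 1, 0 < B r s x - 2 * x + 1) :
    ∃ θ < 2, ∀ x ∈ Set.Icc (0 : ℝ) 1, 1 - B r s x ≤ θ * (1 - x) := by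
  obtain ⟨x₀, hx₀, hmax⟩ := isCompact_Icc.exists_isMaxOn (Set.nonempty_Icc.2 zero_le_one)
    (continuous_tailRatio (r := r) (s := s)).continuousOn
  refine ⟨tailRatio r s x₀, ?_, fun x hx => ?_⟩
  · rcases hx₀.2.lt_or_eq with hlt | rfl
    · -- `B x - 2 x + 1 = (1 - x) (2 - tailRatio r s x)`
      have hB := one_sub_B_eq_mul_tailRatio (by omega) hrs x₀
      have hprod : 0 < (1 - x₀) * (2 - tailRatio r s x₀) := by
        linarith [hpos x₀ ⟨hx₀.1, hlt⟩]
      linarith [pos_of_mul_pos_right hprod (sub_nonneg.2 hx₀.2)]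
    · rw [tailRatio_one hs]
      norm_num
  · rw [one_sub_B_eq_mul_tailRatio (by omega) hrs, mul_comm]
    exact mul_le_mul_of_nonneg_right (hmax hx) (sub_nonneg.2 hx.2)

end

lemma f_succ_eq (r s m : ℕ) (x y : ℝ) :
    f r s (m + 1) x y = 2 * (1 - x) + (m + 1) * (1 - B r s x) - (m + 2) * (1 - B r s y) := by
  simp only [f]
  push_cast
  ring

lemma tendsto_zero_of_mul_le_mul_sub_succ {a : ℕ → ℝ} {κ : ℝ} (hκ : 0 < κ) (ha : ∀ m, 0 ≤ a m)
    (hstep : ∀ m, κ * a (m + 1) ≤ ((m : ℝ) + 2) * (a m - a (m + 1))) :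
    Tendsto a atTop (𝓝 0) := by
  have hanti : Antitone a := antitone_nat_of_succ_le fun m => by
    nlinarith [hstep m, ha (m + 1), (m.cast_nonneg : (0 : ℝ) ≤ m)]
  have hbdd : BddBelow (Set.range a) := ⟨0, by rintro _ ⟨m, rfl⟩; exact ha m⟩
  have hlim := tendsto_atTop_ciInf hanti hbdd
  obtain hL | hL := (le_ciInf ha).eq_or_lt
  · rwa [← hL] at hlim
  -- a positive limit `L` would give `a m - a (m + 1) ≥ κ L / (m + 2)`, a divergent series
  exfalso
  set L := ⨅ m, a m
  apply Real.not_summable_one_div_natCast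
  rw [← summable_nat_add_iff 2]
  refine summable_of_sum_range_le (c := a 0 / (κ * L)) (fun n => by positivity) fun n => ?_
  have hterm : ∀ m, κ * L * (1 / ((m + 2 : ℕ) : ℝ)) ≤ a m - a (m + 1) := fun m => by
    have := mul_le_mul_of_nonneg_left (ciInf_le hbdd (m + 1)) hκ.le
    rw [mul_one_div, div_le_iff₀ (by positivity)]
    push_cast
    linarith [hstep m]
  have hsum := sum_le_sum fun m (_ : m ∈ range n) => hterm m
  rw [← mul_sum, sum_range_sub'] at hsum
  rw [le_div_iff₀ (by positivity), mul_comm]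
  linarith [ha n]

lemma tendsto_zero_of_le_mul_of_lt_two {q a : ℕ → ℝ} {θ : ℝ} (hθ : θ < 2)
    (hq : ∀ m, 0 ≤ q m) (ha : ∀ m, 0 ≤ a m) (haq : ∀ m, a m ≤ θ * q m)
    (hrec : ∀ m : ℕ, ((m : ℝ) + 2) * a m = (m + 1) * a (m + 1) + 2 * q (m + 1)) :
    Tendsto a atTop (𝓝 0) := by
  refine tendsto_zero_of_mul_le_mul_sub_succ (κ := (2 - θ) / 2) (by linarith) ha fun m => ?_
  nlinarith [hrec m, mul_nonneg (by linarith : (0 : ℝ) ≤ 4 - θ)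
      (by linarith [haq (m + 1)] : 0 ≤ θ * q (m + 1) - a (m + 1)),
    mul_nonneg (hq (m + 1)) (sq_nonneg (2 - θ))]

lemma tendsto_zero_of_pow_le {ι : Type*} {l : Filter ι} {u v : ι → ℝ} {n : ℕ} (hn : n ≠ 0)
    (hu : ∀ i, 0 ≤ u i) (huv : ∀ i, u i ^ n ≤ v i) (hv : Tendsto v l (𝓝 0)) :
    Tendsto u l (𝓝 0) := by
  refine tendsto_order.2 ⟨fun b hb => .of_forall fun i => hb.trans_le (hu i), fun ε hε => ?_⟩
  filter_upwards [hv.eventually (gt_mem_nhds (pow_pos hε n))] with i hi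
  exact (pow_lt_pow_iff_left₀ (hu i) hε.le hn).1 ((huv i).trans_lt hi)

lemma summable_of_two_mul_le {q a : ℕ → ℝ} {N : ℕ} (hq : ∀ m, 0 ≤ q m) (ha : ∀ m, 0 ≤ a m)
    (hrec : ∀ m : ℕ, ((m : ℝ) + 2) * a m = (m + 1) * a (m + 1) + 2 * q (m + 1))
    (haq : ∀ m, N ≤ m → 2 * a m ≤ q m) : Summable q := by
  -- Abel summation of the recurrence from `N` on; the bound `2 a ≤ q` absorbs the `a`-terms.
  have hpartial : ∀ M : ℕ, ∑ j ∈ range M, q (j + N + 1) + ((M + N : ℕ) + 2) * a (M + N)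
      ≤ ((N : ℝ) + 2) * a N := by
    intro M
    induction M with
    | zero => simp
    | succ M ih =>
      have := hrec (M + N)
      have := haq (M + N + 1) (by omega)
      rw [sum_range_succ, show M + 1 + N = M + N + 1 by omega]
      push_cast at *
      linarith
  refine (summable_nat_add_iff (N + 1)).1 <|
    summable_of_sum_range_le (c := ((N : ℝ) + 2) * a N) (fun j => hq _) fun M => ?_
  have : 0 ≤ (((M + N : ℕ) : ℝ) + 2) * a (M + N) := mul_nonneg (by positivity) (ha _)
  have hM := hpartial M
  simp only [add_assoc] at hM
  linarith

lemma exists_nat_add_two_mul_lt_of_summable {q : ℕ → ℝ} (hq : Summable q) {ε : ℝ}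
    (hε : 0 < ε) : ∃ k : ℕ, ((k : ℝ) + 2) * q k < ε := by
  by_contra! h
  apply Real.not_summable_one_div_natCast
  rw [← summable_nat_add_iff 2]
  refine (hq.div_const ε).of_nonneg_of_le (fun n => by positivity) fun n => ?_
  rw [le_div_iff₀ hε, one_div_mul_eq_div, div_le_iff₀ (by positivity)]
  push_cast
  linarith [h n]

lemma le_mul_pow_of_recurrence {q a : ℕ → ℝ} {C : ℝ} {s : ℕ} (ha : ∀ m, 0 ≤ a m)
    (haq : ∀ m, a m ≤ C * q m ^ s)
    (hrec : ∀ m : ℕ, ((m : ℝ) + 2) * a m = (m + 1) * a (m + 1) + 2 * q (m + 1)) (k : ℕ) :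
    q (k + 1) ≤ C * ((k : ℝ) + 2) * q k ^ s := by
  nlinarith [hrec k, mul_le_mul_of_nonneg_left (haq k) (by positivity : (0 : ℝ) ≤ k + 2),
    mul_nonneg (by positivity : (0 : ℝ) ≤ k + 1) (ha (k + 1)),
    mul_nonneg (by positivity : (0 : ℝ) ≤ k + 2) ((ha k).trans (haq k))]

lemma exists_le_exp_neg_mul_pow {δ : ℕ → ℝ} {s K : ℕ} (hs : 0 < s) (hδ : ∀ k, 0 ≤ δ k)
    (hstep : ∀ k, δ (k + 1) ≤ δ k ^ s) (hK : δ K ∈ Set.Ioo 0 1) :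
    ∃ c > 0, ∀ k ≥ K, δ k ≤ Real.exp (-(c * (s : ℝ) ^ k)) := by
  have hiter : ∀ j, δ (K + j) ≤ δ K ^ s ^ j := by
    intro j
    induction j with
    | zero => simp
    | succ j ih =>
      calc δ (K + j + 1) ≤ δ (K + j) ^ s := hstep _
        _ ≤ (δ K ^ s ^ j) ^ s := pow_le_pow_left₀ (hδ _) ih s
        _ = δ K ^ s ^ (j + 1) := by rw [← pow_mul, pow_succ]
  have hsK : (0 : ℝ) < (s : ℝ) ^ K := by positivity
  refine ⟨-Real.log (δ K) / (s : ℝ) ^ K,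
    div_pos (neg_pos.2 (Real.log_neg hK.1 hK.2)) hsK, fun k hk => ?_⟩
  obtain ⟨j, rfl⟩ := Nat.exists_eq_add_of_le hk
  calc δ (K + j) ≤ δ K ^ s ^ j := hiter j
    _ = Real.exp (((s ^ j : ℕ) : ℝ) * Real.log (δ K)) := by
      rw [Real.exp_nat_mul, Real.exp_log hK.1]
    _ = Real.exp (-(-Real.log (δ K) / (s : ℝ) ^ K * (s : ℝ) ^ (K + j))) := by
      congr 1
      field_simp
      push_cast
      ring

lemma exists_le_exp_neg_mul_pow_of_le_mul_pow {q : ℕ → ℝ} {C : ℝ} {s K : ℕ} (hC : 1 ≤ C)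
    (hs : 2 ≤ s) (hq : ∀ k, 0 ≤ q k) (hstep : ∀ k, q (k + 1) ≤ C * ((k : ℝ) + 2) * q k ^ s)
    (hK : 2 * C * ((K : ℝ) + 2) * q K ∈ Set.Ioo 0 1) :
    ∃ c > 0, ∀ k ≥ K, q k ≤ Real.exp (-(c * (s : ℝ) ^ k)) := by
  have hw : ∀ k : ℕ, 1 ≤ 2 * C * ((k : ℝ) + 2) := fun k => by
    nlinarith [(k.cast_nonneg : (0 : ℝ) ≤ k)]
  have hδ : ∀ k, 2 * C * (((k + 1 : ℕ) : ℝ) + 2) * q (k + 1)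
      ≤ (2 * C * ((k : ℝ) + 2) * q k) ^ s := fun k => by
    have hqs : 0 ≤ q k ^ s := pow_nonneg (hq k) s
    calc 2 * C * (((k + 1 : ℕ) : ℝ) + 2) * q (k + 1)
        ≤ 2 * C * (((k + 1 : ℕ) : ℝ) + 2) * (C * ((k : ℝ) + 2) * q k ^ s) :=
          mul_le_mul_of_nonneg_left (hstep k) (by positivity)
      _ ≤ (2 * C * ((k : ℝ) + 2)) ^ 2 * q k ^ s := by
          push_cast
          nlinarith [mul_nonneg (mul_nonneg (by positivity : (0 : ℝ) ≤ C * C) hqs)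
            (by positivity : (0 : ℝ) ≤ (k : ℝ) + 2)]
      _ ≤ (2 * C * ((k : ℝ) + 2)) ^ s * q k ^ s :=
          mul_le_mul_of_nonneg_right (pow_le_pow_right₀ (hw k) hs) hqs
      _ = (2 * C * ((k : ℝ) + 2) * q k) ^ s := (mul_pow _ _ _).symm
  obtain ⟨c, hc, hdecay⟩ := exists_le_exp_neg_mul_pow (δ := fun k => 2 * C * ((k : ℝ) + 2) * q k)
    (by omega) (fun k => mul_nonneg (by linarith [hw k]) (hq k)) hδ hK
  exact ⟨c, hc, fun k hk => (le_mul_of_one_le_left (hq k) (hw k)).trans (hdecay k hk)⟩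

/-- For `r ≥ s ≥ 2`: if `B_{r,s}(p) - 2p + 1 > 0` for all `p ∈ [0,1)`
(i.e. `p_* = 1`), then `-log(1 - p_k) = Ω(s^k)`: there are `c > 0` and `K` with
`1 - p_k ≤ exp(-c s^k)` for all `k ≥ K`. -/
theorem stmt_12 (r s : ℕ) (hs : 2 ≤ s) (hrs : s ≤ r) (p : ℕ → ℝ)
    (hp0 : p 0 = 0)
    (hp : ∀ k, 1 ≤ k → p k ∈ Set.Ioo (0 : ℝ) 1 ∧ f r s k (p k) (p (k - 1)) = 0)
    (hpos : ∀ q ∈ Set.Ico (0 : ℝ) 1, 0 < B r s q - 2 * q + 1) :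
    ∃ c : ℝ, 0 < c ∧ ∃ K : ℕ, ∀ k : ℕ, K ≤ k →
      1 - p k ≤ Real.exp (-(c * (s : ℝ) ^ k)) := by
  have hIco : ∀ k, p k ∈ Set.Ico (0 : ℝ) 1 := fun k => by
    rcases k.eq_zero_or_pos with rfl | hk
    · simp [hp0]
    · exact Set.Ioo_subset_Ico_self (hp k hk).1
  have hmem : ∀ k, p k ∈ Set.Icc (0 : ℝ) 1 := fun k => Set.Ico_subset_Icc_self (hIco k)
  set q : ℕ → ℝ := fun k => 1 - p k
  set a : ℕ → ℝ := fun k => 1 - B r s (p k)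
  have hq : ∀ k, 0 < q k := fun k => sub_pos.2 (hIco k).2
  have ha : ∀ k, 0 ≤ a k := fun k => one_sub_B_nonneg (by omega) hrs (hmem k)
  have haq : ∀ k, a k ≤ 2 ^ r * q k ^ s := fun k => one_sub_B_le (by omega) hrs (hmem k)
  have hrec : ∀ m : ℕ, ((m : ℝ) + 2) * a m = (m + 1) * a (m + 1) + 2 * q (m + 1) := fun m => by
    have := (hp (m + 1) (by omega)).2
    rw [Nat.add_sub_cancel, f_succ_eq] at this
    simp only [q, a]
    linarith
  obtain ⟨θ, hθ, haθ⟩ := exists_one_sub_B_le_mul_lt_two hs hrs hpos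
  have hq0 : Tendsto q atTop (𝓝 0) := tendsto_zero_of_pow_le (n := r) (by omega)
    (fun k => (hq k).le) (fun k => pow_le_one_sub_B (by omega) hrs (hmem k))
    (tendsto_zero_of_le_mul_of_lt_two hθ (fun k => (hq k).le) ha (fun k => haθ _ (hmem k)) hrec)
  obtain ⟨N, hN⟩ : ∃ N, ∀ m ≥ N, 2 * a m ≤ q m := eventually_atTop.1 <| by
    filter_upwards [hq0.eventually (ge_mem_nhds (by positivity : (0 : ℝ) < 1 / 2 ^ (r + 1)))]
      with m hm
    exact two_mul_one_sub_B_le hs hrs (hmem m) ((le_div_iff₀' (by positivity)).1 hm)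
  obtain ⟨K, hK⟩ := exists_nat_add_two_mul_lt_of_summable
    (summable_of_two_mul_le (fun k => (hq k).le) ha hrec hN)
    (by positivity : (0 : ℝ) < 1 / (2 * 2 ^ r))
  obtain ⟨c, hc, hdecay⟩ := exists_le_exp_neg_mul_pow_of_le_mul_pow (K := K)
    (one_le_pow₀ one_le_two) hs (fun k => (hq k).le) (le_mul_pow_of_recurrence ha haq hrec)
    ⟨by have := hq K; positivity, by rw [mul_assoc]; exact (lt_div_iff₀' (by positivity)).1 hK⟩
  exact ⟨c, hc, K, hdecay⟩
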